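/- For any pure states {|ψ_i⟩}_{i=1}^N in ℂ^d and any POVM {M_i} on (ℂ^d)^{⊗k}, the average success probability of discriminating the k-copy states satisfies (1/N) ∑_{i=1}^N Tr(|ψ_i⟩⟨ψ_i|^{⊗k} M_i) ≤ C(d+k-1, k)/N. -/

import Mathlib

open ComplexOrder
open scoped BigOperators

/-- The `k`-fold tensor power of a matrix on `ℂ^d`, as a matrix on `(ℂ^d)^{⊗k}` with
basis indexed by `Fin k → Fin d`. -/
noncomputable def kronPow (d k : ℕ) (A : Matrix (Fin d) (Fin d) ℂ) :
    Matrix (Fin k → Fin d) (Fin k → Fin d) ℂ :=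
  Matrix.of fun f g => ∏ l, A (f l) (g l)

/-- The rank-one projector `|ψ⟩⟨ψ|` associated to a vector `ψ ∈ ℂ^d`. -/
noncomputable def pureProj (d : ℕ) (ψ : Fin d → ℂ) : Matrix (Fin d) (Fin d) ℂ :=
  Matrix.of fun a b => ψ a * star (ψ b)

/-! ### Auxiliary development: the projector onto the symmetric subspace -/

/-- The multiset of values of `f : Fin k → Fin d`, as an element of `Sym (Fin d) k`. -/
noncomputable def symOf (d k : ℕ) (f : Fin k → Fin d) : Sym (Fin d) k :=
  ⟨Finset.univ.val.map f, by simp⟩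

lemma symOf_val (d k : ℕ) (f : Fin k → Fin d) :
    (symOf d k f).1 = Finset.univ.val.map f := rfl

lemma symOf_surjective (d k : ℕ) : Function.Surjective (symOf d k) := by
  intro s
  obtain ⟨m, hm⟩ := s
  have hlen : m.toList.length = k := by simpa using hm
  refine ⟨fun i => m.toList.get (Fin.cast hlen.symm i), Sym.coe_injective ?_⟩
  show (symOf d k _).1 = m
  rw [symOf_val, Fin.univ_val_map]
  conv_rhs => rw [← m.coe_toList]
  show _ = (↑m.toList : Multiset (Fin d))
  congr 1
  subst hlen
  exact List.ofFn_get m.toList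

open Classical in
/-- The number of functions `Fin k → Fin d` with a given multiset of values. -/
noncomputable def fibCard (d k : ℕ) (s : Sym (Fin d) k) : ℕ :=
  (Finset.univ.filter (fun f : Fin k → Fin d => symOf d k f = s)).card

open Classical in
/-- The orthogonal projector onto the symmetric subspace of `(ℂ^d)^{⊗k}`. -/
noncomputable def symP (d k : ℕ) : Matrix (Fin k → Fin d) (Fin k → Fin d) ℂ :=
  Matrix.of fun f g =>
    if symOf d k f = symOf d k g then ((fibCard d k (symOf d k f) : ℂ))⁻¹ else 0

lemma fibCard_ne (d k : ℕ) (s : Sym (Fin d) k) : (fibCard d k s : ℂ) ≠ 0 := by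
  classical
  obtain ⟨f, rfl⟩ := symOf_surjective d k s
  have hpos : 0 < fibCard d k (symOf d k f) :=
    Finset.card_pos.mpr ⟨f, by simp [fibCard]⟩
  exact_mod_cast hpos.ne'

lemma symP_herm (d k : ℕ) : (symP d k).conjTranspose = symP d k := by
  ext f g
  simp only [Matrix.conjTranspose_apply, symP, Matrix.of_apply]
  by_cases h : symOf d k f = symOf d k g
  · rw [if_pos h, if_pos h.symm, h]
    simp
  · rw [if_neg h, if_neg (fun e => h e.symm), star_zero]

lemma symP_row_sum (d k : ℕ) (f : Fin k → Fin d) (w : (Fin k → Fin d) → ℂ)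
    (hw : ∀ g, symOf d k g = symOf d k f → w g = w f) :
    ∑ h, symP d k f h * w h = w f := by
  classical
  have step : ∀ h, symP d k f h * w h =
      if symOf d k h = symOf d k f then ((fibCard d k (symOf d k f) : ℂ))⁻¹ * w f else 0 := by
    intro h
    simp only [symP, Matrix.of_apply]
    by_cases hh : symOf d k h = symOf d k f
    · rw [if_pos hh.symm, if_pos hh, hw h hh]
    · rw [if_neg (fun e => hh e.symm), if_neg hh, zero_mul]
  rw [Finset.sum_congr rfl (fun h _ => step h), ← Finset.sum_filter]
  rw [Finset.sum_const]
  have hc : (Finset.univ.filter (fun h : Fin k → Fin d => symOf d k h = symOf d k f)).card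
      = fibCard d k (symOf d k f) := by simp [fibCard]
  rw [hc, nsmul_eq_mul, ← mul_assoc, mul_inv_cancel₀ (fibCard_ne d k _), one_mul]

lemma symP_mul_symP (d k : ℕ) : symP d k * symP d k = symP d k := by
  ext f g
  rw [Matrix.mul_apply]
  exact symP_row_sum d k f (fun h => symP d k h g) (by
    intro h hh
    simp only [symP, Matrix.of_apply, hh])

lemma trace_symP (d k : ℕ) :
    (symP d k).trace = ((d + k - 1).choose k : ℂ) := by
  classical
  have h1 : (symP d k).trace = ∑ f : Fin k → Fin d, ((fibCard d k (symOf d k f) : ℂ))⁻¹ := by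
    simp [Matrix.trace, Matrix.diag, symP]
  rw [h1, Finset.sum_comp (fun s : Sym (Fin d) k => ((fibCard d k s : ℂ))⁻¹) (symOf d k)]
  rw [Finset.image_univ_of_surjective (symOf_surjective d k)]
  have h2 : ∀ s : Sym (Fin d) k,
      (Finset.univ.filter (fun f : Fin k → Fin d => symOf d k f = s)).card
        • ((fibCard d k s : ℂ))⁻¹ = 1 := by
    intro s
    have hc : (Finset.univ.filter (fun f : Fin k → Fin d => symOf d k f = s)).card
        = fibCard d k s := by simp [fibCard]
    rw [hc, nsmul_eq_mul, mul_inv_cancel₀ (fibCard_ne d k s)]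
  rw [Finset.sum_congr rfl (fun s _ => h2 s), Finset.sum_const, nsmul_eq_mul, mul_one]
  rw [Finset.card_univ, Sym.card_sym_eq_choose]
  simp

/-! ### Cauchy–Schwarz bound -/

lemma row_cauchy {n : Type*} [Fintype n] (b v : n → ℂ)
    (hv : ∑ j, Complex.normSq (v j) = 1) :
    Complex.normSq (∑ j, b j * v j) ≤ ∑ j, Complex.normSq (b j) := by
  let x : EuclideanSpace ℂ n := WithLp.toLp 2 (fun j => star (b j))
  let y : EuclideanSpace ℂ n := WithLp.toLp 2 v
  have hinner : inner ℂ x y = ∑ j, b j * v j := by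
    simp [PiLp.inner_apply, x, y, mul_comm]
  have hcs := norm_inner_le_norm (𝕜 := ℂ) x y
  have hx : ‖x‖ ^ 2 = ∑ j, Complex.normSq (b j) := by
    rw [EuclideanSpace.norm_eq]
    rw [Real.sq_sqrt (by positivity)]
    exact Finset.sum_congr rfl fun j _ => by
      simp [x, Complex.sq_norm, Complex.normSq_conj]
  have hy : ‖y‖ ^ 2 = 1 := by
    rw [EuclideanSpace.norm_eq, Real.sq_sqrt (by positivity)]
    rw [← hv]
    exact Finset.sum_congr rfl fun j _ => by simp [y, Complex.sq_norm]
  calc Complex.normSq (∑ j, b j * v j) = ‖(inner ℂ x y : ℂ)‖ ^ 2 := by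
        rw [hinner, Complex.sq_norm]
      _ ≤ (‖x‖ * ‖y‖) ^ 2 := by
        apply pow_le_pow_left₀ (norm_nonneg _) hcs
      _ = ‖x‖ ^2 * ‖y‖^2 := by ring
      _ = ∑ j, Complex.normSq (b j) := by rw [hx, hy, mul_one]

lemma quad_le_trace {n : Type*} [Fintype n] [DecidableEq n] {Q : Matrix n n ℂ}
    (hQ : Q.PosSemidef) (v : n → ℂ) (hv : ∑ j, star (v j) * v j = 1) :
    dotProduct (star v) (Q.mulVec v) ≤ Q.trace := by
  open MatrixOrder in obtain ⟨B, hB⟩ := CStarAlgebra.nonneg_iff_eq_star_mul_self.mp hQ.nonneg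
  rw [Matrix.star_eq_conjTranspose] at hB; subst hB
  have hvnorm : ∑ j, Complex.normSq (v j) = 1 := by
    have h : ((∑ j, Complex.normSq (v j) : ℝ) : ℂ) = 1 := by
      push_cast
      rw [← hv]
      exact Finset.sum_congr rfl fun j _ => by
        rw [Complex.star_def, Complex.normSq_eq_conj_mul_self]
    exact_mod_cast h
  have hL : dotProduct (star v) ((B.conjTranspose * B).mulVec v)
      = ((∑ i, Complex.normSq ((B.mulVec v) i) : ℝ) : ℂ) := by
    rw [← Matrix.mulVec_mulVec, Matrix.dotProduct_mulVec, ← Matrix.star_mulVec]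
    push_cast
    simp only [dotProduct, Pi.star_apply]
    exact Finset.sum_congr rfl fun i _ => by
      rw [Complex.star_def, Complex.normSq_eq_conj_mul_self]
  have hT : (B.conjTranspose * B).trace = ((∑ j, ∑ i, Complex.normSq (B i j) : ℝ) : ℂ) := by
    push_cast
    simp only [Matrix.trace, Matrix.diag, Matrix.mul_apply, Matrix.conjTranspose_apply]
    exact Finset.sum_congr rfl fun j _ => Finset.sum_congr rfl fun i _ => by
      rw [Complex.star_def, Complex.normSq_eq_conj_mul_self]
  rw [hL, hT, Complex.real_le_real]
  rw [Finset.sum_comm]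
  apply Finset.sum_le_sum
  intro i _
  exact row_cauchy (fun j => B i j) v hvnorm

/-! ### The tensor-power vector -/

/-- The `k`-fold tensor power of the vector `ψ`. -/
noncomputable def tensVec (d k : ℕ) (ψ : Fin d → ℂ) : (Fin k → Fin d) → ℂ :=
  fun f => ∏ l, ψ (f l)

lemma tensVec_symOf (d k : ℕ) (ψ : Fin d → ℂ) {f g : Fin k → Fin d}
    (h : symOf d k g = symOf d k f) : tensVec d k ψ g = tensVec d k ψ f := by
  have hm : Finset.univ.val.map g = Finset.univ.val.map f := by
    have := congrArg Subtype.val h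
    simpa [symOf] using this
  unfold tensVec
  rw [Finset.prod_eq_multiset_prod, Finset.prod_eq_multiset_prod,
    show (fun l => ψ (g l)) = ψ ∘ g from rfl, show (fun l => ψ (f l)) = ψ ∘ f from rfl,
    ← Multiset.map_map, ← Multiset.map_map, hm]

lemma kronPow_pureProj (d k : ℕ) (ψ : Fin d → ℂ) :
    kronPow d k (pureProj d ψ) =
      Matrix.vecMulVec (tensVec d k ψ) (star (tensVec d k ψ)) := by
  ext f g
  simp only [kronPow, pureProj, Matrix.of_apply, Matrix.vecMulVec_apply, Pi.star_apply,
    tensVec]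
  rw [Finset.prod_mul_distrib, star_prod]

lemma tensVec_norm (d k : ℕ) (ψ : Fin d → ℂ) (hψ : ∑ j, star (ψ j) * ψ j = 1) :
    ∑ f, star (tensVec d k ψ f) * tensVec d k ψ f = 1 := by
  have : ∀ f : Fin k → Fin d,
      star (tensVec d k ψ f) * tensVec d k ψ f = ∏ l, star (ψ (f l)) * ψ (f l) := by
    intro f
    rw [tensVec, star_prod, ← Finset.prod_mul_distrib]
  rw [Finset.sum_congr rfl (fun f _ => this f)]
  rw [← Fintype.piFinset_univ, ← Finset.prod_univ_sum (fun _ : Fin k => (Finset.univ : Finset (Fin d))) (fun _ j => star (ψ j) * ψ j)]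
  rw [Finset.prod_congr rfl fun l _ => hψ, Finset.prod_const_one]

lemma trace_vecMulVec_mul {n : Type*} [Fintype n] (v : n → ℂ) (M : Matrix n n ℂ) :
    (Matrix.vecMulVec v (star v) * M).trace = dotProduct (star v) (M.mulVec v) := by
  simp only [Matrix.trace, Matrix.diag, Matrix.mul_apply, Matrix.vecMulVec_apply,
    dotProduct, Matrix.mulVec, Pi.star_apply]
  rw [Finset.sum_comm]
  apply Finset.sum_congr rfl
  intro g _
  rw [Finset.mul_sum]
  apply Finset.sum_congr rfl
  intro f _
  ring

lemma symP_mul_tens (d k : ℕ) (ψ : Fin d → ℂ) :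
    symP d k * kronPow d k (pureProj d ψ) = kronPow d k (pureProj d ψ) := by
  rw [kronPow_pureProj]
  ext f g
  rw [Matrix.mul_apply]
  simp only [Matrix.vecMulVec_apply, Pi.star_apply]
  have := symP_row_sum d k f (fun h => tensVec d k ψ h * star (tensVec d k ψ g))
    (fun h hh => by
      show tensVec d k ψ h * _ = tensVec d k ψ f * _
      rw [tensVec_symOf d k ψ hh])
  simpa [mul_assoc] using this

lemma tens_mul_symP (d k : ℕ) (ψ : Fin d → ℂ) :
    kronPow d k (pureProj d ψ) * symP d k = kronPow d k (pureProj d ψ) := by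
  have herm : (kronPow d k (pureProj d ψ)).conjTranspose = kronPow d k (pureProj d ψ) := by
    rw [kronPow_pureProj]
    ext f g
    simp only [Matrix.conjTranspose_apply, Matrix.vecMulVec_apply, Pi.star_apply]
    rw [star_mul, star_star]
  calc kronPow d k (pureProj d ψ) * symP d k
      = ((symP d k).conjTranspose * (kronPow d k (pureProj d ψ)).conjTranspose).conjTranspose := by
        rw [← Matrix.conjTranspose_mul, Matrix.conjTranspose_conjTranspose]
    _ = kronPow d k (pureProj d ψ) := by
        rw [symP_herm, herm, symP_mul_tens, herm]

/-- For any pure states `ψ i ∈ ℂ^d` and any POVM `M` on `(ℂ^d)^{⊗k}`, the average success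
probability of discriminating the `k`-copy states is at most `C(d+k-1,k)/N`. -/
theorem kcopy_pure_upper_bound (d N k : ℕ)
    (ψ : Fin N → Fin d → ℂ) (hψ : ∀ i, ∑ j, star (ψ i j) * ψ i j = 1)
    (M : Fin N → Matrix (Fin k → Fin d) (Fin k → Fin d) ℂ)
    (hMpos : ∀ i, (M i).PosSemidef) (hMsum : ∑ i, M i = 1) :
    (N : ℂ)⁻¹ * ∑ i, (kronPow d k (pureProj d (ψ i)) * M i).trace ≤
      (Nat.choose (d + k - 1) k : ℂ) / N := by
  classical
  set P := symP d k with hP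
  -- bound each term
  have key : ∀ i, (kronPow d k (pureProj d (ψ i)) * M i).trace ≤ (P * M i * P).trace := by
    intro i
    have h1 : (kronPow d k (pureProj d (ψ i)) * M i).trace
        = (kronPow d k (pureProj d (ψ i)) * (P * M i * P)).trace := by
      conv_lhs => rw [← symP_mul_tens d k (ψ i)]
      rw [Matrix.mul_assoc, Matrix.trace_mul_comm, Matrix.mul_assoc]
      conv_lhs => rw [← tens_mul_symP d k (ψ i)]
      rw [Matrix.mul_assoc, Matrix.mul_assoc P (M i) P]
    have hQpos : (P * M i * P).PosSemidef := by
      have h := (hMpos i).conjTranspose_mul_mul_same P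
      rwa [symP_herm] at h
    have h2 : (kronPow d k (pureProj d (ψ i)) * (P * M i * P)).trace
        = dotProduct (star (tensVec d k (ψ i))) ((P * M i * P).mulVec (tensVec d k (ψ i))) := by
      rw [kronPow_pureProj, trace_vecMulVec_mul]
    rw [h1, h2]
    exact quad_le_trace hQpos _ (tensVec_norm d k (ψ i) (hψ i))
  have hsum : ∑ i, (P * M i * P).trace = ((d + k - 1).choose k : ℂ) := by
    rw [← Matrix.trace_sum, ← Finset.sum_mul, ← Finset.mul_sum, hMsum, mul_one,
      symP_mul_symP, trace_symP]
  have hS : ∑ i, (kronPow d k (pureProj d (ψ i)) * M i).trace ≤ ((d + k - 1).choose k : ℂ) := by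
    rw [← hsum]
    exact Finset.sum_le_sum (fun i _ => key i)
  have hNinv : (0:ℂ) ≤ (N:ℂ)⁻¹ := by
    have : ((N:ℝ)⁻¹ : ℂ) = (N:ℂ)⁻¹ := by push_cast; ring
    rw [← this]
    exact_mod_cast inv_nonneg.mpr (Nat.cast_nonneg N)
  calc (N : ℂ)⁻¹ * ∑ i, (kronPow d k (pureProj d (ψ i)) * M i).trace
      ≤ (N : ℂ)⁻¹ * ((d + k - 1).choose k : ℂ) := mul_le_mul_of_nonneg_left hS hNinv
    _ = (Nat.choose (d + k - 1) k : ℂ) / N := by rw [inv_mul_eq_div]
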